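/- arXiv:1610.05553 — 2 statements merged into one kernel-verified Lean document; each statement's English description precedes it below -/
import Mathlib

section
/- For every k ≥ 3, the following identity holds: ((B 1 k)⁻¹ − (B 1 (k+1))⁻¹)⁻¹ + ((B 1 (k+1))⁻¹ − (B 1 (k+2))⁻¹)⁻¹ = (−1)^{k+1} N_k N_kᵀ, where N_k = t_1 · (∏_{i=2}^{k−1} t_i⁻ᵀ (I + B (i+1) k)) · t_k⁻ᵀ · t_{k+1}⁻ᵀ · u_k · t_{k+2}⁻ᵀ (the product over i taken in increasing order of i, the factor for i = 2 leftmost), u_k = I + t_{k+1}ᵀ H_k t_{k+1}, H_k = I + ∑_{i=0}^{k−3} (−1)^{i+1} M_i (I + B (k−i) k) M_iᵀ, and M_i = ∏_{j=0}^{i} t_{k−j}ᵀ (I + B (k−j) k)⁻¹ (the product over j taken in increasing order of j, the factor for j = 0 leftmost). -/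
open Matrix


section AuxGeneral

variable {n : ℕ}

lemma posdef_conj {A T : Matrix (Fin n) (Fin n) ℝ} (hA : A.PosDef) (hT : IsUnit T.det) :
    (T * A * Tᵀ).PosDef := by
  rw [← conjTranspose_eq_transpose_of_trivial]
  refine Matrix.PosDef.of_dotProduct_mulVec_pos (isHermitian_mul_mul_conjTranspose _ hA.1) (fun y hy => ?_)
  have hTH : IsUnit (Tᴴ) := by
    rw [conjTranspose_eq_transpose_of_trivial]
    exact (Matrix.isUnit_iff_isUnit_det _).2 (by simpa using hT)
  have h1 : Tᴴ *ᵥ y ≠ 0 := by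
    intro h
    exact hy ((Matrix.mulVec_injective_iff_isUnit.mpr hTH) (h.trans (Matrix.mulVec_zero _).symm))
  have := hA.dotProduct_mulVec_pos h1
  calc (0:ℝ) < star (Tᴴ *ᵥ y) ⬝ᵥ A *ᵥ (Tᴴ *ᵥ y) := this
    _ = star y ⬝ᵥ (T * A * Tᴴ) *ᵥ y := by
        rw [star_mulVec, conjTranspose_conjTranspose, ← Matrix.dotProduct_mulVec,
          ← Matrix.mulVec_mulVec, ← Matrix.mulVec_mulVec]

lemma det_unit_of_lower {T : Matrix (Fin n) (Fin n) ℝ}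
    (hl : ∀ i k : Fin n, i < k → T i k = 0) (hd : ∀ i : Fin n, 0 < T i i) :
    IsUnit T.det := by
  have : T.det = ∏ i, T i i := Matrix.det_of_lowerTriangular T (fun i j hij => hl i j hij)
  rw [this]
  exact (Finset.prod_pos (fun i _ => hd i)).ne'.isUnit

end AuxGeneral

section AuxGeneral2

variable {n : ℕ}

lemma sub_inv_eq {A C : Matrix (Fin n) (Fin n) ℝ} (hA : IsUnit A.det) (hC : IsUnit C.det) :
    A⁻¹ - C⁻¹ = A⁻¹ * (C - A) * C⁻¹ := by
  rw [Matrix.mul_sub, Matrix.sub_mul, Matrix.mul_assoc, Matrix.mul_nonsing_inv _ hC,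
    Matrix.mul_one, Matrix.nonsing_inv_mul _ hA, Matrix.one_mul]

lemma inv_one_add {X : Matrix (Fin n) (Fin n) ℝ} (hu : IsUnit (1+X).det) :
    (1+X)⁻¹ * X = 1 - (1+X)⁻¹ := by
  have h : (1+X)⁻¹ * (1 + X) = 1 := Matrix.nonsing_inv_mul _ hu
  rw [Matrix.mul_add, Matrix.mul_one] at h
  calc (1+X)⁻¹ * X = ((1+X)⁻¹ + (1+X)⁻¹ * X) - (1+X)⁻¹ := by abel
    _ = 1 - (1+X)⁻¹ := by rw [h]

lemma base_alg {y v d c : Matrix (Fin n) (Fin n) ℝ}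
    (hy1 : y * y⁻¹ = 1) (hy2 : y⁻¹ * y = 1) (hd : v * d = 1) (hc : c = 1 + y - d) :
    (y⁻¹ + 1) - (1+y) * v * c = -((1+y) * (v - y⁻¹) * (1+y)) := by
  subst hc
  simp only [Matrix.mul_sub, Matrix.sub_mul, Matrix.mul_add, Matrix.add_mul,
    Matrix.one_mul, Matrix.mul_one, Matrix.mul_assoc, hd, hy1, hy2]
  abel

end AuxGeneral2

/-- `M_i = ∏_{j=0}^{i} t_{k−j}ᵀ (I + B (k−j) k)⁻¹` (ordered product, `j = 0` leftmost). -/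
noncomputable def Mprod (n : ℕ) (t : ℕ → Matrix (Fin n) (Fin n) ℝ)
    (B : ℕ → ℕ → Matrix (Fin n) (Fin n) ℝ) (k i : ℕ) : Matrix (Fin n) (Fin n) ℝ :=
  (((List.range (i+1)).map (fun j => (t (k-j))ᵀ * (1 + B (k-j) k)⁻¹)).prod)

/-- `H_k = I + ∑_{i=0}^{k−3} (−1)^{i+1} M_i (I + B (k−i) k) M_iᵀ`. -/
noncomputable def Hmat (n : ℕ) (t : ℕ → Matrix (Fin n) (Fin n) ℝ)
    (B : ℕ → ℕ → Matrix (Fin n) (Fin n) ℝ) (k : ℕ) : Matrix (Fin n) (Fin n) ℝ :=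
  1 + ∑ i ∈ Finset.range (k-2),
    (-1 : ℝ) ^ (i+1) • (Mprod n t B k i * (1 + B (k-i) k) * (Mprod n t B k i)ᵀ)

/-- `u_k = I + t_{k+1}ᵀ H_k t_{k+1}`. -/
noncomputable def umat (n : ℕ) (t : ℕ → Matrix (Fin n) (Fin n) ℝ)
    (B : ℕ → ℕ → Matrix (Fin n) (Fin n) ℝ) (k : ℕ) : Matrix (Fin n) (Fin n) ℝ :=
  1 + (t (k+1))ᵀ * Hmat n t B k * t (k+1)

/-- `N_k = t₁ · (∏_{i=2}^{k−1} t_i⁻ᵀ (I + B (i+1) k)) · t_k⁻ᵀ · t_{k+1}⁻ᵀ · u_k · t_{k+2}⁻ᵀ`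
(ordered product over increasing `i`, the factor for `i = 2` leftmost). -/
noncomputable def Nmat (n : ℕ) (t : ℕ → Matrix (Fin n) (Fin n) ℝ)
    (B : ℕ → ℕ → Matrix (Fin n) (Fin n) ℝ) (k : ℕ) : Matrix (Fin n) (Fin n) ℝ :=
  t 1 * (((List.range (k-2)).map (fun i => ((t (i+2))ᵀ)⁻¹ * (1 + B (i+3) k))).prod)
    * ((t k)ᵀ)⁻¹ * ((t (k+1))ᵀ)⁻¹ * umat n t B k * ((t (k+2))ᵀ)⁻¹


section AuxDefs

/-- `R_m = (∏_{i=m}^{K-1} t_iᵀ⁻¹ (1 + B (i+1) K)) · (t_K)ᵀ⁻¹`. -/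
noncomputable def RR (n : ℕ) (t : ℕ → Matrix (Fin n) (Fin n) ℝ)
    (B : ℕ → ℕ → Matrix (Fin n) (Fin n) ℝ) (K m : ℕ) : Matrix (Fin n) (Fin n) ℝ :=
  (((List.range (K-m)).map (fun i => ((t (i+m))ᵀ)⁻¹ * (1 + B (i+m+1) K))).prod) * ((t K)ᵀ)⁻¹

/-- partial `H`: `H^{(m)} = 1 + ∑_{i=0}^{k-m-1} (-1)^{i+1} M_i (1 + B (k-i) k) M_iᵀ`. -/
noncomputable def Hp (n : ℕ) (t : ℕ → Matrix (Fin n) (Fin n) ℝ)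
    (B : ℕ → ℕ → Matrix (Fin n) (Fin n) ℝ) (k m : ℕ) : Matrix (Fin n) (Fin n) ℝ :=
  1 + ∑ i ∈ Finset.range (k-m),
    (-1 : ℝ) ^ (i+1) • (Mprod n t B k i * (1 + B (k-i) k) * (Mprod n t B k i)ᵀ)

variable {n : ℕ} (t : ℕ → Matrix (Fin n) (Fin n) ℝ) (B : ℕ → ℕ → Matrix (Fin n) (Fin n) ℝ)

lemma RR_last (K : ℕ) : RR n t B K K = ((t K)ᵀ)⁻¹ := by
  unfold RR; simp

lemma RR_peel {K m : ℕ} (h : m < K) :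
    RR n t B K m = ((t m)ᵀ)⁻¹ * (1 + B (m+1) K) * RR n t B K (m+1) := by
  unfold RR
  have h1 : K - m = (K - (m+1)) + 1 := by omega
  rw [h1, List.range_succ_eq_map, List.map_cons, List.map_map, List.prod_cons]
  have h2 : (List.range (K - (m+1))).map ((fun i => ((t (i+m))ᵀ)⁻¹ * (1 + B (i+m+1) K)) ∘ Nat.succ)
      = (List.range (K-(m+1))).map (fun i => ((t (i+(m+1)))ᵀ)⁻¹ * (1 + B (i+(m+1)+1) K)) := by
    apply List.map_congr_left; intro i _
    simp only [Function.comp]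
    have e1 : i.succ + m = i + (m+1) := by omega
    rw [e1]
  rw [h2]
  simp only [Nat.zero_add, Matrix.mul_assoc]

lemma Hp_last (k : ℕ) : Hp n t B k k = 1 := by
  unfold Hp; simp

lemma Hp_peel {k m : ℕ} (h2 : 2 ≤ m) (h : m < k) :
    Hp n t B k m = Hp n t B k (m+1) + (-1:ℝ)^(k-m) •
      (Mprod n t B k (k-1-m) * (1 + B (m+1) k) * (Mprod n t B k (k-1-m))ᵀ) := by
  unfold Hp
  have h1 : k - m = (k - (m+1)) + 1 := by omega
  rw [h1, Finset.sum_range_succ]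
  have e1 : k - (k - (m+1)) = m + 1 := by omega
  have e2 : k - (m+1) + 1 = k - m := by omega
  have e3 : k - 1 - m = k - (m+1) := by omega
  rw [e1, e2, e3, add_assoc]

lemma Mprod_zero (k : ℕ) : Mprod n t B k 0 = (t k)ᵀ * (1 + B k k)⁻¹ := by
  unfold Mprod
  simp [List.range_succ]

lemma Mprod_succ (k i : ℕ) :
    Mprod n t B k (i+1) = Mprod n t B k i * ((t (k-(i+1)))ᵀ * (1 + B (k-(i+1)) k)⁻¹) := by
  unfold Mprod
  rw [List.range_succ, List.map_append, List.prod_append]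
  simp [Matrix.mul_assoc]

end AuxDefs

set_option maxHeartbeats 1000000 in
/-- For every `k ≥ 3`,
`((B 1 k)⁻¹ − (B 1 (k+1))⁻¹)⁻¹ + ((B 1 (k+1))⁻¹ − (B 1 (k+2))⁻¹)⁻¹ = (−1)^{k+1} N_k N_kᵀ`. -/
theorem F_k_eq
    (n : ℕ) (hn : 1 ≤ n)
    (t : ℕ → Matrix (Fin n) (Fin n) ℝ)
    (ht_lower : ∀ j, 1 ≤ j → ∀ i k : Fin n, i < k → t j i k = 0)
    (ht_diag : ∀ j, 1 ≤ j → ∀ i : Fin n, 0 < t j i i)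
    (x : ℕ → Matrix (Fin n) (Fin n) ℝ)
    (hx : ∀ j, 1 ≤ j → x j = t j * (t j)ᵀ)
    (B : ℕ → ℕ → Matrix (Fin n) (Fin n) ℝ)
    (hB_diag : ∀ k, 1 ≤ k → B k k = x k)
    (hB_rec : ∀ j k, 1 ≤ j → j < k → B j k = t j * (1 + B (j+1) k)⁻¹ * (t j)ᵀ) :
    ∀ k, 3 ≤ k →
      ((B 1 k)⁻¹ - (B 1 (k+1))⁻¹)⁻¹ + ((B 1 (k+1))⁻¹ - (B 1 (k+2))⁻¹)⁻¹
        = (-1 : ℝ) ^ (k+1) • (Nmat n t B k * (Nmat n t B k)ᵀ) := by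
  intro k hk
  -- ## units of t
  have htu : ∀ j, 1 ≤ j → IsUnit (t j).det := fun j hj =>
    det_unit_of_lower (ht_lower j hj) (ht_diag j hj)
  have htTu : ∀ j, 1 ≤ j → IsUnit ((t j)ᵀ).det := fun j hj => by
    rw [Matrix.det_transpose]; exact htu j hj
  have hBkk : ∀ K, 1 ≤ K → B K K = t K * (t K)ᵀ := fun K hK => by
    rw [hB_diag K hK, hx K hK]
  -- ## positive definiteness
  have hxpd : ∀ j, 1 ≤ j → (t j * (t j)ᵀ).PosDef := by
    intro j hj
    have h : t j * (t j)ᵀ = t j * 1 * (t j)ᵀ := by rw [Matrix.mul_one]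
    rw [h]; exact posdef_conj Matrix.PosDef.one (htu j hj)
  have hxu : ∀ j, 1 ≤ j → IsUnit (t j * (t j)ᵀ).det := fun j hj =>
    (hxpd j hj).det_pos.ne'.isUnit
  have hxQpd : ∀ j, 1 ≤ j → (1 + t j * (t j)ᵀ).PosDef := fun j hj =>
    (Matrix.PosDef.one).add (hxpd j hj)
  have hxQu : ∀ j, 1 ≤ j → IsUnit (1 + t j * (t j)ᵀ).det := fun j hj =>
    (hxQpd j hj).det_pos.ne'.isUnit
  have hBpd : ∀ K j, 1 ≤ j → j ≤ K → (B j K).PosDef := by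
    have key : ∀ d K j, 1 ≤ j → j + d = K → (B j K).PosDef := by
      intro d
      induction d with
      | zero =>
        intro K j h1 h2
        have h : j = K := by omega
        rw [← h, hBkk j h1]
        have h3 : t j * (t j)ᵀ = t j * 1 * (t j)ᵀ := by rw [Matrix.mul_one]
        rw [h3]; exact posdef_conj Matrix.PosDef.one (htu j h1)
      | succ d ih =>
        intro K j h1 h2
        rw [hB_rec j K h1 (by omega)]
        exact posdef_conj
          (((Matrix.PosDef.one).add (ih K (j+1) (by omega) (by omega))).inv) (htu j h1)
    intro K j h1 h2
    exact key (K - j) K j h1 (by omega)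
  have hBsym : ∀ K j, 1 ≤ j → j ≤ K → (B j K)ᵀ = B j K := by
    intro K j h1 h2
    have h := (hBpd K j h1 h2).1
    rwa [Matrix.IsHermitian, conjTranspose_eq_transpose_of_trivial] at h
  have hQpd : ∀ K j, 1 ≤ j → j ≤ K → (1 + B j K).PosDef := fun K j h1 h2 =>
    (Matrix.PosDef.one).add (hBpd K j h1 h2)
  have hQu : ∀ K j, 1 ≤ j → j ≤ K → IsUnit (1 + B j K).det := fun K j h1 h2 =>
    (hQpd K j h1 h2).det_pos.ne'.isUnit
  have hQsym : ∀ K j, 1 ≤ j → j ≤ K → (1 + B j K)ᵀ = 1 + B j K := by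
    intro K j h1 h2
    rw [Matrix.transpose_add, Matrix.transpose_one, hBsym K j h1 h2]
  -- ## the difference matrices D_j = B j K - B j (K+1)
  have hDrec : ∀ K j, 1 ≤ j → j < K → B j K - B j (K+1) =
      -(t j * (1 + B (j+1) K)⁻¹ * (B (j+1) K - B (j+1) (K+1)) * (1 + B (j+1) (K+1))⁻¹ * (t j)ᵀ) := by
    intro K j h1 h2
    have hu : IsUnit (1 + B (j+1) K).det := hQu K (j+1) (by omega) (by omega)
    have hu' : IsUnit (1 + B (j+1) (K+1)).det := hQu (K+1) (j+1) (by omega) (by omega)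
    rw [hB_rec j K h1 h2, hB_rec j (K+1) h1 (by omega)]
    have e := sub_inv_eq hu hu'
    calc t j * (1 + B (j+1) K)⁻¹ * (t j)ᵀ - t j * (1 + B (j+1) (K+1))⁻¹ * (t j)ᵀ
        = t j * ((1 + B (j+1) K)⁻¹ - (1 + B (j+1) (K+1))⁻¹) * (t j)ᵀ := by
          rw [Matrix.mul_sub, Matrix.sub_mul]
      _ = -(t j * (1 + B (j+1) K)⁻¹ * (B (j+1) K - B (j+1) (K+1)) * (1 + B (j+1) (K+1))⁻¹ * (t j)ᵀ) := by
          rw [e]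
          have e2 : (1 + B (j+1) (K+1)) - (1 + B (j+1) K) = -(B (j+1) K - B (j+1) (K+1)) := by abel
          rw [e2]
          simp only [Matrix.mul_neg, Matrix.neg_mul, Matrix.mul_assoc]
  have hDbase : ∀ K, 1 ≤ K → B K K - B K (K+1)
      = t K * (1 + t (K+1) * (t (K+1))ᵀ)⁻¹ * (t (K+1) * (t (K+1))ᵀ) * (t K)ᵀ := by
    intro K h1
    rw [hB_rec K (K+1) h1 (by omega), hB_diag (K+1) (by omega), hx (K+1) (by omega), hBkk K h1]
    have e := inv_one_add (hxQu (K+1) (by omega))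
    calc t K * (t K)ᵀ - t K * (1 + t (K+1) * (t (K+1))ᵀ)⁻¹ * (t K)ᵀ
        = t K * (1 - (1 + t (K+1) * (t (K+1))ᵀ)⁻¹) * (t K)ᵀ := by
          rw [Matrix.mul_sub, Matrix.mul_one, Matrix.sub_mul]
      _ = t K * ((1 + t (K+1) * (t (K+1))ᵀ)⁻¹ * (t (K+1) * (t (K+1))ᵀ)) * (t K)ᵀ := by rw [e]
      _ = t K * (1 + t (K+1) * (t (K+1))ᵀ)⁻¹ * (t (K+1) * (t (K+1))ᵀ) * (t K)ᵀ := by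
          rw [Matrix.mul_assoc (t K) ((1 + t (K+1) * (t (K+1))ᵀ)⁻¹) (t (K+1) * (t (K+1))ᵀ)]
  have hDsym : ∀ K j, 1 ≤ j → j ≤ K → (B j K - B j (K+1))ᵀ = B j K - B j (K+1) := by
    intro K j h1 h2
    rw [Matrix.transpose_sub, hBsym K j h1 h2, hBsym (K+1) j h1 (by omega)]
  have hDu : ∀ K j, 1 ≤ j → j ≤ K → IsUnit (B j K - B j (K+1)).det := by
    have key : ∀ d K j, 1 ≤ j → j + d = K → IsUnit (B j K - B j (K+1)).det := by
      intro d
      induction d with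
      | zero =>
        intro K j h1 h2
        have h : j = K := by omega
        rw [← h, hDbase j h1]
        simp only [Matrix.det_mul]
        exact (((htu j h1).mul (Matrix.isUnit_nonsing_inv_det _ (hxQu (j+1) (by omega)))).mul
          ((htu (j+1) (by omega)).mul (htTu (j+1) (by omega)))).mul (htTu j h1)
      | succ d ih =>
        intro K j h1 h2
        rw [hDrec K j h1 (by omega), Matrix.det_neg]
        apply IsUnit.mul
        · exact (isUnit_one.neg).pow _
        · simp only [Matrix.det_mul]
          exact ((((htu j h1).mul
            (Matrix.isUnit_nonsing_inv_det _ (hQu K (j+1) (by omega) (by omega)))).mul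
            (ih K (j+1) (by omega) (by omega))).mul
            (Matrix.isUnit_nonsing_inv_det _ (hQu (K+1) (j+1) (by omega) (by omega)))).mul
            (htTu j h1)
    intro K j h1 h2
    exact key (K-j) K j h1 (by omega)
  have hDinvrec : ∀ K j, 1 ≤ j → j < K → (B j K - B j (K+1))⁻¹ =
      -(((t j)ᵀ)⁻¹ * (1 + B (j+1) (K+1)) * (B (j+1) K - B (j+1) (K+1))⁻¹ * (1 + B (j+1) K) * (t j)⁻¹) := by
    intro K j h1 h2
    have hu : IsUnit (1 + B (j+1) K).det := hQu K (j+1) (by omega) (by omega)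
    have hu' : IsUnit (1 + B (j+1) (K+1)).det := hQu (K+1) (j+1) (by omega) (by omega)
    have hd' : IsUnit (B (j+1) K - B (j+1) (K+1)).det := hDu K (j+1) (by omega) (by omega)
    rw [hDrec K j h1 h2]
    apply Matrix.inv_eq_right_inv
    rw [neg_mul_neg]
    simp only [Matrix.mul_assoc]
    rw [Matrix.mul_nonsing_inv_cancel_left _ _ (htTu j h1),
        Matrix.nonsing_inv_mul_cancel_left _ _ hu',
        Matrix.mul_nonsing_inv_cancel_left _ _ hd',
        Matrix.nonsing_inv_mul_cancel_left _ _ hu,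
        Matrix.mul_nonsing_inv _ (htu j h1)]
  have hDinvbase : ∀ K, 1 ≤ K → (B K K - B K (K+1))⁻¹
      = ((t K)ᵀ)⁻¹ * ((t (K+1) * (t (K+1))ᵀ)⁻¹ + 1) * (t K)⁻¹ := by
    intro K h1
    rw [hDbase K h1]
    apply Matrix.inv_eq_right_inv
    simp only [Matrix.mul_assoc]
    rw [Matrix.mul_nonsing_inv_cancel_left _ _ (htTu K h1)]
    have e : t (K+1) * ((t (K+1))ᵀ * (((t (K+1) * (t (K+1))ᵀ)⁻¹ + 1) * (t K)⁻¹))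
        = (1 + t (K+1) * (t (K+1))ᵀ) * (t K)⁻¹ := by
      rw [← Matrix.mul_assoc, ← Matrix.mul_assoc, Matrix.mul_add,
        Matrix.mul_nonsing_inv _ (hxu (K+1) (by omega)), Matrix.mul_one, Matrix.add_mul]
    rw [e, Matrix.nonsing_inv_mul_cancel_left _ _ (hxQu (K+1) (by omega)),
      Matrix.mul_nonsing_inv _ (htu K h1)]
  have hDinvrecT : ∀ K j, 1 ≤ j → j < K → (B j K - B j (K+1))⁻¹ =
      -(((t j)ᵀ)⁻¹ * (1 + B (j+1) K) * (B (j+1) K - B (j+1) (K+1))⁻¹ * (1 + B (j+1) (K+1)) * (t j)⁻¹) := by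
    intro K j h1 h2
    have hsymD : ((B j K - B j (K+1))⁻¹)ᵀ = (B j K - B j (K+1))⁻¹ := by
      rw [Matrix.transpose_nonsing_inv, hDsym K j h1 (le_of_lt h2)]
    have hsymD' : ((B (j+1) K - B (j+1) (K+1))⁻¹)ᵀ = (B (j+1) K - B (j+1) (K+1))⁻¹ := by
      rw [Matrix.transpose_nonsing_inv, hDsym K (j+1) (by omega) (by omega)]
    conv_lhs => rw [← hsymD, hDinvrec K j h1 h2]
    rw [Matrix.transpose_neg]
    simp only [Matrix.transpose_mul, Matrix.transpose_nonsing_inv, Matrix.transpose_transpose]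
    rw [hQsym K (j+1) (by omega) (by omega), hQsym (K+1) (j+1) (by omega) (by omega)]
    rw [show ((B (j+1) K - B (j+1) (K+1))ᵀ)⁻¹ = (B (j+1) K - B (j+1) (K+1))⁻¹ by
      rw [← Matrix.transpose_nonsing_inv]; exact hsymD']
    simp only [Matrix.mul_assoc]
  -- ## R * M = Q⁻¹
  have hRM : ∀ i, i ≤ k - 3 → RR n t B k (k-i) * Mprod n t B k i = (1 + B (k-i) k)⁻¹ := by
    intro i
    induction i with
    | zero =>
      intro _
      rw [Nat.sub_zero, RR_last t B, Mprod_zero t B,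
        Matrix.nonsing_inv_mul_cancel_left _ _ (htTu k (by omega))]
    | succ i ih =>
      intro hi
      have hlt : k - (i+1) < k := by omega
      rw [RR_peel t B hlt, show k - (i+1) + 1 = k - i from by omega, Mprod_succ t B k i]
      have ih' := ih (by omega)
      have cRM : ∀ X : Matrix (Fin n) (Fin n) ℝ,
          RR n t B k (k-i) * (Mprod n t B k i * X) = (1 + B (k-i) k)⁻¹ * X := by
        intro X; rw [← Matrix.mul_assoc, ih']
      simp only [Matrix.mul_assoc]
      rw [cRM, Matrix.mul_nonsing_inv_cancel_left _ _ (hQu k (k-i) (by omega) (by omega)),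
        Matrix.nonsing_inv_mul_cancel_left _ _ (htTu (k-(i+1)) (by omega))]
  -- ## units of RR
  have hRRu : ∀ d m, 1 ≤ m → m + d = k → IsUnit (RR n t B k m).det := by
    intro d
    induction d with
    | zero =>
      intro m h1 h2
      have h : m = k := by omega
      rw [h, RR_last t B]
      exact Matrix.isUnit_nonsing_inv_det _ (htTu k (by omega))
    | succ d ih =>
      intro m h1 h2
      rw [RR_peel t B (show m < k from by omega)]
      simp only [Matrix.det_mul]
      exact ((Matrix.isUnit_nonsing_inv_det _ (htTu m h1)).mul
        (hQu k (m+1) (by omega) (by omega))).mul (ih (m+1) (by omega) (by omega))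
  -- ## Mᵀ in terms of RRᵀ⁻¹
  have hMT : ∀ i, i ≤ k - 3 →
      (Mprod n t B k i)ᵀ = (1 + B (k-i) k)⁻¹ * ((RR n t B k (k-i))ᵀ)⁻¹ := by
    intro i hi
    have h1 : 1 ≤ k - i := by omega
    have hRu : IsUnit (RR n t B k (k-i)).det := hRRu (k - (k-i)) (k-i) h1 (by omega)
    have hM : Mprod n t B k i = (RR n t B k (k-i))⁻¹ * (1 + B (k-i) k)⁻¹ := by
      rw [← hRM i hi, Matrix.nonsing_inv_mul_cancel_left _ _ hRu]
    rw [hM, Matrix.transpose_mul, Matrix.transpose_nonsing_inv, Matrix.transpose_nonsing_inv,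
      hQsym k (k-i) h1 (by omega)]
  -- ## the star lemma
  have hstar : ∀ d m, m = k - d → d ≤ k - 3 →
      (B m k - B m (k+1)) * RR n t B k m * (((t (k+1))ᵀ)⁻¹ + Hp n t B k m * t (k+1))
        = (-1:ℝ)^(k-m) • (((RR n t B k m)ᵀ)⁻¹ * t (k+1)) := by
    intro d
    induction d with
    | zero =>
      intro m hm _
      have hm' : m = k := by omega
      subst hm'
      rw [RR_last t B, Hp_last t B, hDbase m (by omega), Matrix.one_mul, Nat.sub_self, pow_zero,
        one_smul, Matrix.transpose_nonsing_inv, Matrix.transpose_transpose,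
        Matrix.nonsing_inv_nonsing_inv _ (htu m (by omega))]
      have hτ : ((t (m+1))ᵀ)⁻¹ + t (m+1) = (1 + t (m+1) * (t (m+1))ᵀ) * ((t (m+1))ᵀ)⁻¹ := by
        rw [Matrix.add_mul, Matrix.one_mul, Matrix.mul_assoc,
          Matrix.mul_nonsing_inv _ (htTu (m+1) (by omega)), Matrix.mul_one]
      rw [hτ]
      simp only [Matrix.mul_assoc]
      rw [Matrix.mul_nonsing_inv_cancel_left _ _ (htTu m (by omega))]
      have hcomm : t (m+1) * ((t (m+1))ᵀ * ((1 + t (m+1) * (t (m+1))ᵀ) * ((t (m+1))ᵀ)⁻¹))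
          = (1 + t (m+1) * (t (m+1))ᵀ) * (t (m+1) * ((t (m+1))ᵀ * ((t (m+1))ᵀ)⁻¹)) := by
        noncomm_ring
      rw [hcomm, Matrix.nonsing_inv_mul_cancel_left _ _ (hxQu (m+1) (by omega)),
        Matrix.mul_nonsing_inv _ (htTu (m+1) (by omega)), Matrix.mul_one]
    | succ d ih =>
      intro m hm hd
      have h1m : 1 ≤ m := by omega
      have hmk : m < k := by omega
      have h3m : 3 ≤ m := by omega
      have huQ : IsUnit (1 + B (m+1) k).det := hQu k (m+1) (by omega) (by omega)
      have huQ' : IsUnit (1 + B (m+1) (k+1)).det := hQu (k+1) (m+1) (by omega) (by omega)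
      have huD' : IsUnit (B (m+1) k - B (m+1) (k+1)).det := hDu k (m+1) (by omega) (by omega)
      have huR' : IsUnit (RR n t B k (m+1)).det := hRRu (k-(m+1)) (m+1) (by omega) (by omega)
      have IH := ih (m+1) (by omega) (by omega)
      have eI : k - (k-1-m) = m+1 := by omega
      have hRM' : RR n t B k (m+1) * Mprod n t B k (k-1-m) = (1 + B (m+1) k)⁻¹ := by
        have h := hRM (k-1-m) (by omega); rwa [eI] at h
      have hMT' : (Mprod n t B k (k-1-m))ᵀ = (1 + B (m+1) k)⁻¹ * ((RR n t B k (m+1))ᵀ)⁻¹ := by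
        have h := hMT (k-1-m) (by omega); rwa [eI] at h
      have hsgn : (-1:ℝ)^(k-m) = -(-1:ℝ)^(k-(m+1)) := by
        rw [show k - m = (k-(m+1)) + 1 from by omega, pow_succ, mul_neg_one]
      rw [hDrec k m h1m hmk, RR_peel t B hmk, Hp_peel t B (by omega) hmk, hsgn]
      have hRRmT : ((((t m)ᵀ)⁻¹ * (1 + B (m+1) k) * RR n t B k (m+1))ᵀ)⁻¹
          = t m * ((1 + B (m+1) k)⁻¹ * ((RR n t B k (m+1))ᵀ)⁻¹) := by
        simp only [Matrix.transpose_mul, Matrix.transpose_nonsing_inv, Matrix.transpose_transpose]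
        rw [hQsym k (m+1) (by omega) (by omega)]
        rw [Matrix.mul_inv_rev, Matrix.mul_inv_rev,
          Matrix.nonsing_inv_nonsing_inv _ (htu m h1m)]
        simp only [Matrix.mul_assoc]
      rw [hRRmT]
      -- abbreviation-free names for readability of the remaining computation
      have e1 : (Mprod n t B k (k-1-m))ᵀ * t (k+1)
          = (1 + B (m+1) k)⁻¹ * (((RR n t B k (m+1))ᵀ)⁻¹ * t (k+1)) := by
        rw [hMT', Matrix.mul_assoc]
      have E1 : RR n t B k (m+1) * ((((t (k+1))ᵀ)⁻¹ + Hp n t B k (m+1) * t (k+1)) +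
            (-(-1:ℝ)^(k-(m+1))) • (Mprod n t B k (k-1-m) * ((1 + B (m+1) k) * ((Mprod n t B k (k-1-m))ᵀ * t (k+1)))))
          = RR n t B k (m+1) * (((t (k+1))ᵀ)⁻¹ + Hp n t B k (m+1) * t (k+1))
            + (-(-1:ℝ)^(k-(m+1))) • ((1 + B (m+1) k)⁻¹ * (((RR n t B k (m+1))ᵀ)⁻¹ * t (k+1))) := by
        rw [Matrix.mul_add, mul_smul_comm, e1,
          Matrix.mul_nonsing_inv_cancel_left _ _ huQ,
          ← Matrix.mul_assoc (RR n t B k (m+1)) (Mprod n t B k (k-1-m)) _, hRM']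
      have stepQ : (1 + B (m+1) (k+1))⁻¹ * (1 + B (m+1) k)
          = 1 + (1 + B (m+1) (k+1))⁻¹ * (B (m+1) k - B (m+1) (k+1)) := by
        have e : (1 + B (m+1) k) = (1 + B (m+1) (k+1)) + (B (m+1) k - B (m+1) (k+1)) := by abel
        rw [e, Matrix.mul_add, Matrix.nonsing_inv_mul _ huQ']
      have step4 : (B (m+1) k - B (m+1) (k+1)) *
            (RR n t B k (m+1) * (((t (k+1))ᵀ)⁻¹ + Hp n t B k (m+1) * t (k+1)))
          = (-1:ℝ)^(k-(m+1)) • (((RR n t B k (m+1))ᵀ)⁻¹ * t (k+1)) := by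
        rw [← Matrix.mul_assoc]; exact IH
      have E2 : (B (m+1) k - B (m+1) (k+1)) * ((1 + B (m+1) (k+1))⁻¹ * ((1 + B (m+1) k) *
            (RR n t B k (m+1) * (((t (k+1))ᵀ)⁻¹ + Hp n t B k (m+1) * t (k+1))
              + (-(-1:ℝ)^(k-(m+1))) • ((1 + B (m+1) k)⁻¹ * (((RR n t B k (m+1))ᵀ)⁻¹ * t (k+1))))))
          = (-1:ℝ)^(k-(m+1)) • (((RR n t B k (m+1))ᵀ)⁻¹ * t (k+1)) := by
        rw [Matrix.mul_add, mul_smul_comm, Matrix.mul_nonsing_inv_cancel_left _ _ huQ]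
        have eU : (1 + B (m+1) (k+1))⁻¹ * ((1 + B (m+1) k) *
              (RR n t B k (m+1) * (((t (k+1))ᵀ)⁻¹ + Hp n t B k (m+1) * t (k+1))))
            = RR n t B k (m+1) * (((t (k+1))ᵀ)⁻¹ + Hp n t B k (m+1) * t (k+1))
              + (1 + B (m+1) (k+1))⁻¹ * ((B (m+1) k - B (m+1) (k+1)) *
                  (RR n t B k (m+1) * (((t (k+1))ᵀ)⁻¹ + Hp n t B k (m+1) * t (k+1)))) := by
          rw [← Matrix.mul_assoc, stepQ, Matrix.add_mul, Matrix.one_mul, Matrix.mul_assoc]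
        rw [Matrix.mul_add, eU, mul_smul_comm, Matrix.mul_add, Matrix.mul_add, step4]
        simp only [mul_smul_comm]
        module
      calc -(t m * (1 + B (m+1) k)⁻¹ * (B (m+1) k - B (m+1) (k+1)) * (1 + B (m+1) (k+1))⁻¹ * (t m)ᵀ) *
            (((t m)ᵀ)⁻¹ * (1 + B (m+1) k) * RR n t B k (m+1)) *
            (((t (k+1))ᵀ)⁻¹ + (Hp n t B k (m+1) + (-(-1:ℝ)^(k-(m+1))) •
              (Mprod n t B k (k-1-m) * (1 + B (m+1) k) * (Mprod n t B k (k-1-m))ᵀ)) * t (k+1))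
          = -(t m * ((1 + B (m+1) k)⁻¹ * ((B (m+1) k - B (m+1) (k+1)) * ((1 + B (m+1) (k+1))⁻¹ *
              ((1 + B (m+1) k) * (RR n t B k (m+1) *
              ((((t (k+1))ᵀ)⁻¹ + Hp n t B k (m+1) * t (k+1)) +
                (-(-1:ℝ)^(k-(m+1))) • (Mprod n t B k (k-1-m) * ((1 + B (m+1) k) *
                  ((Mprod n t B k (k-1-m))ᵀ * t (k+1))))))))))) := by
            have c1 : ∀ X : Matrix (Fin n) (Fin n) ℝ, (t m)ᵀ * (((t m)ᵀ)⁻¹ * X) = X :=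
              fun X => Matrix.mul_nonsing_inv_cancel_left _ _ (htTu m h1m)
            simp only [neg_mul, Matrix.mul_assoc, c1, Matrix.add_mul, smul_mul_assoc,
              Matrix.mul_add, mul_smul_comm, add_assoc]
        _ = -(t m * ((1 + B (m+1) k)⁻¹ * ((B (m+1) k - B (m+1) (k+1)) * ((1 + B (m+1) (k+1))⁻¹ *
              ((1 + B (m+1) k) * (RR n t B k (m+1) *
                (((t (k+1))ᵀ)⁻¹ + Hp n t B k (m+1) * t (k+1))
              + (-(-1:ℝ)^(k-(m+1))) • ((1 + B (m+1) k)⁻¹ * (((RR n t B k (m+1))ᵀ)⁻¹ * t (k+1))))))))) := by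
            rw [E1]
        _ = -(t m * ((1 + B (m+1) k)⁻¹ * ((-1:ℝ)^(k-(m+1)) • (((RR n t B k (m+1))ᵀ)⁻¹ * t (k+1))))) := by
            rw [E2]
        _ = -(-1:ℝ)^(k-(m+1)) • (t m * ((1 + B (m+1) k)⁻¹ * ((RR n t B k (m+1))ᵀ)⁻¹) * t (k+1)) := by
            simp only [mul_smul_comm, Matrix.mul_assoc, neg_smul]
  -- ## the C lemma
  have hadd : ∀ d j, j = k - d → d ≤ k - 2 →
      RR n t B (k+1) j = RR n t B k j * (((t (k+1))ᵀ)⁻¹ + Hp n t B k j * t (k+1)) := by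
    intro d
    induction d with
    | zero =>
      intro j hj _
      have hj' : j = k := by omega
      subst hj'
      rw [RR_peel t B (show j < j+1 from by omega), RR_last t B, RR_last t B, Hp_last t B,
        Matrix.one_mul, hBkk (j+1) (by omega)]
      have e : (1 + t (j+1) * (t (j+1))ᵀ) * ((t (j+1))ᵀ)⁻¹ = ((t (j+1))ᵀ)⁻¹ + t (j+1) := by
        rw [Matrix.add_mul, Matrix.one_mul, Matrix.mul_assoc,
          Matrix.mul_nonsing_inv _ (htTu (j+1) (by omega)), Matrix.mul_one]
      rw [Matrix.mul_assoc, e]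
    | succ d ih =>
      intro j hj hd2
      have h2j : 2 ≤ j := by omega
      have hjk : j < k := by omega
      have IH := ih (j+1) (by omega) (by omega)
      have huQ : IsUnit (1 + B (j+1) k).det := hQu k (j+1) (by omega) (by omega)
      have eI : k - (k-1-j) = j+1 := by omega
      have hRM' : RR n t B k (j+1) * Mprod n t B k (k-1-j) = (1 + B (j+1) k)⁻¹ := by
        have h := hRM (k-1-j) (by omega); rwa [eI] at h
      have hMT' : (Mprod n t B k (k-1-j))ᵀ = (1 + B (j+1) k)⁻¹ * ((RR n t B k (j+1))ᵀ)⁻¹ := by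
        have h := hMT (k-1-j) (by omega); rwa [eI] at h
      have hstar' := hstar d (j+1) (by omega) (by omega)
      have hsgn : (-1:ℝ)^(k-j) = -(-1:ℝ)^(k-(j+1)) := by
        rw [show k - j = (k-(j+1)) + 1 from by omega, pow_succ, mul_neg_one]
      rw [RR_peel t B (show j < k+1 from by omega), IH, RR_peel t B hjk, Hp_peel t B h2j hjk, hsgn]
      have eQ' : (1 + B (j+1) (k+1)) = (1 + B (j+1) k) - (B (j+1) k - B (j+1) (k+1)) := by abel
      rw [eQ']
      have step4 : (B (j+1) k - B (j+1) (k+1)) *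
            (RR n t B k (j+1) * (((t (k+1))ᵀ)⁻¹ + Hp n t B k (j+1) * t (k+1)))
          = (-1:ℝ)^(k-(j+1)) • (((RR n t B k (j+1))ᵀ)⁻¹ * t (k+1)) := by
        rw [← Matrix.mul_assoc]; exact hstar'
      have e1 : (Mprod n t B k (k-1-j))ᵀ * t (k+1)
          = (1 + B (j+1) k)⁻¹ * (((RR n t B k (j+1))ᵀ)⁻¹ * t (k+1)) := by
        rw [hMT', Matrix.mul_assoc]
      have e3 : RR n t B k (j+1) * (Mprod n t B k (k-1-j) * ((1 + B (j+1) k) *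
            ((Mprod n t B k (k-1-j))ᵀ * t (k+1))))
          = (1 + B (j+1) k)⁻¹ * (((RR n t B k (j+1))ᵀ)⁻¹ * t (k+1)) := by
        rw [e1, Matrix.mul_nonsing_inv_cancel_left _ _ huQ, ← Matrix.mul_assoc, hRM']
      have ER : ((t j)ᵀ)⁻¹ * (1 + B (j+1) k) * RR n t B k (j+1) *
            (((t (k+1))ᵀ)⁻¹ + (Hp n t B k (j+1) + (-(-1:ℝ)^(k-(j+1))) •
              (Mprod n t B k (k-1-j) * (1 + B (j+1) k) * (Mprod n t B k (k-1-j))ᵀ)) * t (k+1))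
          = ((t j)ᵀ)⁻¹ * ((1 + B (j+1) k) * (RR n t B k (j+1) *
              (((t (k+1))ᵀ)⁻¹ + Hp n t B k (j+1) * t (k+1))))
            + (-(-1:ℝ)^(k-(j+1))) • (((t j)ᵀ)⁻¹ * (((RR n t B k (j+1))ᵀ)⁻¹ * t (k+1))) := by
        rw [Matrix.add_mul, smul_mul_assoc, ← add_assoc, Matrix.mul_add, mul_smul_comm]
        simp only [Matrix.mul_assoc]
        rw [e3, Matrix.mul_nonsing_inv_cancel_left _ _ huQ]
      rw [ER, Matrix.mul_sub, Matrix.sub_mul,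
        Matrix.mul_assoc (((t j)ᵀ)⁻¹) (B (j+1) k - B (j+1) (k+1)) _, step4, mul_smul_comm,
        Matrix.mul_assoc (((t j)ᵀ)⁻¹) (1 + B (j+1) k) _]
      module
  -- ## the G recursion
  have hGrec : ∀ j, 2 ≤ j → j < k →
      (B j k - B j (k+1))⁻¹ + (B j (k+1) - B j (k+2))⁻¹
      = -(((t j)ᵀ)⁻¹ * (1 + B (j+1) (k+1)) *
          ((B (j+1) k - B (j+1) (k+1))⁻¹ + (B (j+1) (k+1) - B (j+1) (k+2))⁻¹) *
          ((1 + B (j+1) (k+1)) * (t j)⁻¹)) := by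
    intro j h2 hjk
    have huDk : IsUnit (B (j+1) k - B (j+1) (k+1)).det := hDu k (j+1) (by omega) (by omega)
    have huDp : IsUnit (B (j+1) (k+1) - B (j+1) (k+2)).det := by
      have h := hDu (k+1) (j+1) (by omega) (by omega)
      rwa [show k+1+1 = k+2 from by omega] at h
    have hT := hDinvrecT (k+1) j (by omega) (by omega)
    rw [show k+1+1 = k+2 from by omega] at hT
    rw [hDinvrec k j (by omega) hjk, hT]
    have hA : (B (j+1) k - B (j+1) (k+1))⁻¹ * (1 + B (j+1) k)
        = (B (j+1) k - B (j+1) (k+1))⁻¹ * (1 + B (j+1) (k+1)) + 1 := by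
      have e : (1 + B (j+1) k) = (1 + B (j+1) (k+1)) + (B (j+1) k - B (j+1) (k+1)) := by abel
      rw [e, Matrix.mul_add, Matrix.nonsing_inv_mul _ huDk]
    have hB2 : (B (j+1) (k+1) - B (j+1) (k+2))⁻¹ * (1 + B (j+1) (k+2))
        = (B (j+1) (k+1) - B (j+1) (k+2))⁻¹ * (1 + B (j+1) (k+1)) - 1 := by
      have e : (1 + B (j+1) (k+2)) = (1 + B (j+1) (k+1)) - (B (j+1) (k+1) - B (j+1) (k+2)) := by abel
      rw [e, Matrix.mul_sub, Matrix.nonsing_inv_mul _ huDp]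
    rw [Matrix.mul_assoc (((t j)ᵀ)⁻¹ * (1 + B (j+1) (k+1))) ((B (j+1) k - B (j+1) (k+1))⁻¹)
        (1 + B (j+1) k),
      Matrix.mul_assoc (((t j))ᵀ⁻¹ * (1 + B (j+1) (k+1))) ((B (j+1) (k+1) - B (j+1) (k+2))⁻¹)
        (1 + B (j+1) (k+2)),
      hA, hB2]
    noncomm_ring
  -- ## iterating the G recursion
  have hGiter : ∀ d j, j = k - d → d ≤ k - 2 →
      (B j k - B j (k+1))⁻¹ + (B j (k+1) - B j (k+2))⁻¹
      = (-1:ℝ)^(k+1-j) • (RR n t B (k+1) j * (t (k+2) * (t (k+2))ᵀ)⁻¹ * (RR n t B (k+1) j)ᵀ) := by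
    intro d
    induction d with
    | zero =>
      intro j hj _
      have hj' : j = k := by omega
      subst hj'
      rw [show j+1-j = 1 from by omega, pow_one]
      have hDib2 := hDinvbase (j+1) (by omega)
      rw [show j+1+1 = j+2 from by omega] at hDib2
      have hDu2 : IsUnit (B (j+1) (j+1) - B (j+1) (j+2)).det := by
        have h := hDu (j+1) (j+1) (by omega) (by omega)
        rwa [show j+1+1 = j+2 from by omega] at h
      have hT := hDinvrecT (j+1) j (by omega) (by omega)
      rw [show j+1+1 = j+2 from by omega] at hT
      rw [hDinvbase j (by omega), hT, hDib2, RR_peel t B (show j < j+1 from by omega),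
        RR_last t B, hBkk (j+1) (by omega)]
      have hy1 : (t (j+1) * (t (j+1))ᵀ) * (t (j+1) * (t (j+1))ᵀ)⁻¹ = 1 :=
        Matrix.mul_nonsing_inv _ (hxu (j+1) (by omega))
      have hy2 : (t (j+1) * (t (j+1))ᵀ)⁻¹ * (t (j+1) * (t (j+1))ᵀ) = 1 :=
        Matrix.nonsing_inv_mul _ (hxu (j+1) (by omega))
      have hd : (((t (j+1))ᵀ)⁻¹ * ((t (j+2) * (t (j+2))ᵀ)⁻¹ + 1) * (t (j+1))⁻¹) * (B (j+1) (j+1) - B (j+1) (j+2)) = 1 := by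
        rw [← hDib2]; exact Matrix.nonsing_inv_mul _ hDu2
      have hc : (1 + B (j+1) (j+2)) = 1 + (t (j+1) * (t (j+1))ᵀ) - (B (j+1) (j+1) - B (j+1) (j+2)) := by
        rw [← hBkk (j+1) (by omega)]; abel
      have key := base_alg hy1 hy2 hd hc
      have hw : ((t (j+1))ᵀ)⁻¹ * ((t (j+2) * (t (j+2))ᵀ)⁻¹ + 1) * (t (j+1))⁻¹ - (t (j+1) * (t (j+1))ᵀ)⁻¹ = ((t (j+1))ᵀ)⁻¹ * (t (j+2) * (t (j+2))ᵀ)⁻¹ * (t (j+1))⁻¹ := by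
        rw [Matrix.mul_inv_rev (t (j+1)) ((t (j+1))ᵀ), Matrix.mul_add, Matrix.mul_one,
          Matrix.add_mul]
        abel
      have hysym : (1 + t (j+1) * (t (j+1))ᵀ)ᵀ = 1 + t (j+1) * (t (j+1))ᵀ := by
        rw [Matrix.transpose_add, Matrix.transpose_one, Matrix.transpose_mul,
          Matrix.transpose_transpose]
      have htr : (((t j))ᵀ⁻¹ * (1 + t (j+1) * (t (j+1))ᵀ) * ((t (j+1))ᵀ)⁻¹)ᵀ
          = (t (j+1))⁻¹ * ((1 + t (j+1) * (t (j+1))ᵀ) * (t j)⁻¹) := by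
        simp only [Matrix.transpose_mul, Matrix.transpose_nonsing_inv, Matrix.transpose_transpose,
          hysym, Matrix.mul_assoc]
      rw [htr, neg_one_smul]
      have key2 : ((t j))ᵀ⁻¹ * (((t (j+1) * (t (j+1))ᵀ)⁻¹ + 1) - (1 + t (j+1) * (t (j+1))ᵀ) * (((t (j+1))ᵀ)⁻¹ * ((t (j+2) * (t (j+2))ᵀ)⁻¹ + 1) * (t (j+1))⁻¹) * (1 + B (j+1) (j+2))) * (t j)⁻¹
          = ((t j))ᵀ⁻¹ * (-((1 + t (j+1) * (t (j+1))ᵀ) * (((t (j+1))ᵀ)⁻¹ * (t (j+2) * (t (j+2))ᵀ)⁻¹ * (t (j+1))⁻¹) * (1 + t (j+1) * (t (j+1))ᵀ))) * (t j)⁻¹ := by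
        rw [key, hw]
      calc ((t j))ᵀ⁻¹ * ((t (j+1) * (t (j+1))ᵀ)⁻¹ + 1) * (t j)⁻¹ +
            -((t j)ᵀ⁻¹ * (1 + t (j+1) * (t (j+1))ᵀ) * (((t (j+1))ᵀ)⁻¹ * ((t (j+2) * (t (j+2))ᵀ)⁻¹ + 1) * (t (j+1))⁻¹) * (1 + B (j+1) (j+2)) * (t j)⁻¹)
          = ((t j))ᵀ⁻¹ * (((t (j+1) * (t (j+1))ᵀ)⁻¹ + 1) - (1 + t (j+1) * (t (j+1))ᵀ) * (((t (j+1))ᵀ)⁻¹ * ((t (j+2) * (t (j+2))ᵀ)⁻¹ + 1) * (t (j+1))⁻¹) * (1 + B (j+1) (j+2))) * (t j)⁻¹ := by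
            noncomm_ring
        _ = ((t j))ᵀ⁻¹ * (-((1 + t (j+1) * (t (j+1))ᵀ) * (((t (j+1))ᵀ)⁻¹ * (t (j+2) * (t (j+2))ᵀ)⁻¹ * (t (j+1))⁻¹) * (1 + t (j+1) * (t (j+1))ᵀ))) * (t j)⁻¹ := key2
        _ = -((t j)ᵀ⁻¹ * (1 + t (j+1) * (t (j+1))ᵀ) * ((t (j+1))ᵀ)⁻¹ * (t (j+2) * (t (j+2))ᵀ)⁻¹ *
              ((t (j+1))⁻¹ * ((1 + t (j+1) * (t (j+1))ᵀ) * (t j)⁻¹))) := by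
            noncomm_ring
    | succ d ih =>
      intro j hj hd2
      have h2j : 2 ≤ j := by omega
      have hjk : j < k := by omega
      have IH := ih (j+1) (by omega) (by omega)
      rw [hGrec j h2j hjk, IH, RR_peel t B (show j < k+1 from by omega)]
      have hsgn : (-1:ℝ)^(k+1-j) = -(-1:ℝ)^(k+1-(j+1)) := by
        rw [show k+1-j = (k+1-(j+1))+1 from by omega, pow_succ, mul_neg_one]
      rw [hsgn]
      have hQ'sym := hQsym (k+1) (j+1) (by omega) (by omega)
      simp only [Matrix.transpose_mul, Matrix.transpose_nonsing_inv, Matrix.transpose_transpose,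
        hQ'sym, mul_smul_comm, smul_mul_assoc, Matrix.mul_neg, Matrix.neg_mul, neg_smul,
        Matrix.mul_assoc]
  -- ## reduction of the statement's LHS
  have hLi : ∀ K, k ≤ K → ((B 1 K)⁻¹ - (B 1 (K+1))⁻¹)⁻¹
      = t 1 * (B 2 K - B 2 (K+1))⁻¹ * (t 1)ᵀ := by
    intro K hK
    have hu2 : IsUnit (1 + B 2 K).det := hQu K 2 (by omega) (by omega)
    have hu2' : IsUnit (1 + B 2 (K+1)).det := hQu (K+1) 2 (by omega) (by omega)
    have e1 : (B 1 K)⁻¹ = ((t 1)ᵀ)⁻¹ * ((1 + B 2 K) * (t 1)⁻¹) := by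
      rw [hB_rec 1 K (by omega) (by omega), Matrix.mul_inv_rev, Matrix.mul_inv_rev,
        Matrix.nonsing_inv_nonsing_inv _ hu2]
    have e2 : (B 1 (K+1))⁻¹ = ((t 1)ᵀ)⁻¹ * ((1 + B 2 (K+1)) * (t 1)⁻¹) := by
      rw [hB_rec 1 (K+1) (by omega) (by omega), Matrix.mul_inv_rev, Matrix.mul_inv_rev,
        Matrix.nonsing_inv_nonsing_inv _ hu2']
    rw [e1, e2]
    have e3 : ((t 1)ᵀ)⁻¹ * ((1 + B 2 K) * (t 1)⁻¹) - ((t 1)ᵀ)⁻¹ * ((1 + B 2 (K+1)) * (t 1)⁻¹)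
        = ((t 1)ᵀ)⁻¹ * ((B 2 K - B 2 (K+1)) * (t 1)⁻¹) := by
      have e : (1 + B 2 K) = (B 2 K - B 2 (K+1)) + (1 + B 2 (K+1)) := by abel
      rw [e, Matrix.add_mul, Matrix.mul_add]
      abel
    rw [e3, Matrix.mul_inv_rev, Matrix.mul_inv_rev,
      Matrix.nonsing_inv_nonsing_inv _ (htu 1 (by omega)),
      Matrix.nonsing_inv_nonsing_inv _ (htTu 1 (by omega))]
  -- ## symmetry of umat
  have hHsym : (Hmat n t B k)ᵀ = Hmat n t B k := by
    unfold Hmat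
    rw [Matrix.transpose_add, Matrix.transpose_one, Matrix.transpose_sum]
    congr 1
    apply Finset.sum_congr rfl
    intro i hi
    have hik : i < k - 2 := Finset.mem_range.mp hi
    rw [Matrix.transpose_smul, Matrix.transpose_mul, Matrix.transpose_mul,
      Matrix.transpose_transpose, hQsym k (k-i) (by omega) (by omega)]
    simp only [Matrix.mul_assoc]
  have husym : (umat n t B k)ᵀ = umat n t B k := by
    unfold umat
    rw [Matrix.transpose_add, Matrix.transpose_one, Matrix.transpose_mul, Matrix.transpose_mul,
      Matrix.transpose_transpose, hHsym]
    simp only [Matrix.mul_assoc]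
  have humat : ((t (k+1))ᵀ)⁻¹ + Hp n t B k 2 * t (k+1) = ((t (k+1))ᵀ)⁻¹ * umat n t B k := by
    unfold umat
    rw [Matrix.mul_add, Matrix.mul_one]
    have hHp : Hp n t B k 2 = Hmat n t B k := rfl
    rw [hHp]
    congr 1
    rw [← Matrix.mul_assoc, ← Matrix.mul_assoc, Matrix.nonsing_inv_mul _ (htTu (k+1) (by omega)),
      Matrix.one_mul]
  -- ## the final computation
  have hG2 := hGiter (k-2) 2 (by omega) (by omega)
  have hC2 := hadd (k-2) 2 (by omega) (by omega)
  have hLi2 := hLi (k+1) (by omega)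
  rw [show k+1+1 = k+2 from by omega] at hLi2
  rw [hLi k (le_refl k), hLi2]
  have hsum : t 1 * (B 2 k - B 2 (k+1))⁻¹ * (t 1)ᵀ + t 1 * (B 2 (k+1) - B 2 (k+2))⁻¹ * (t 1)ᵀ
      = t 1 * ((B 2 k - B 2 (k+1))⁻¹ + (B 2 (k+1) - B 2 (k+2))⁻¹) * (t 1)ᵀ := by
    noncomm_ring
  rw [hsum, hG2, show k+1-2 = k-1 from by omega]
  have hes : ((-1:ℝ))^(k+1) = ((-1:ℝ))^(k-1) := by
    have h3 : k+1 = (k-1)+2 := by omega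
    rw [h3, pow_add]
    norm_num
  rw [hes, hC2, humat]
  have hN : Nmat n t B k = t 1 * (RR n t B k 2 * (((t (k+1))ᵀ)⁻¹ * (umat n t B k * ((t (k+2))ᵀ)⁻¹))) := by
    unfold Nmat RR
    simp only [Matrix.mul_assoc]
  rw [hN, show (t (k+2) * (t (k+2))ᵀ)⁻¹ = ((t (k+2))ᵀ)⁻¹ * (t (k+2))⁻¹ from Matrix.mul_inv_rev _ _]
  simp only [Matrix.transpose_mul, Matrix.transpose_nonsing_inv, Matrix.transpose_transpose,
    husym, mul_smul_comm, smul_mul_assoc, Matrix.mul_assoc]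
end

section
/- Define w_k = (−1)^{k+1} (B 1 k − B 1 (k+1)) for k ≥ 1 (each w_k is symmetric positive definite). Then the sequence (w_k) is decreasing in the Loewner order: for every k ≥ 1, the matrix w_k − w_{k+1} is symmetric positive definite. -/
open Matrix

variable {n : ℕ}

/-- Congruence preserves positive definiteness (real case, with transpose). -/
lemma posDef_conj {M T : Matrix (Fin n) (Fin n) ℝ} (hM : M.PosDef) (hT : IsUnit T.det) :
    (T * M * Tᵀ).PosDef := by
  have hMsymm : Mᵀ = M := by
    simpa [conjTranspose_eq_transpose_of_trivial] using hM.1.eq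
  refine PosDef.of_dotProduct_mulVec_pos ?_ ?_
  · show (T * M * Tᵀ)ᴴ = _
    simp [conjTranspose_eq_transpose_of_trivial, transpose_mul, hMsymm, Matrix.mul_assoc]
  · intro x hx
    have hTt : IsUnit (Tᵀ) := by
      rw [Matrix.isUnit_iff_isUnit_det, det_transpose]; exact hT
    have hinj : Function.Injective (Tᵀ).mulVec := mulVec_injective_iff_isUnit.2 hTt
    have hy : Tᵀ *ᵥ x ≠ 0 := by
      intro h
      exact hx (hinj (by simpa using h))
    have := hM.dotProduct_mulVec_pos hy
    simpa [star_trivial, ← mulVec_mulVec, dotProduct_mulVec, mulVec_transpose,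
      Matrix.mul_assoc] using this

open scoped MatrixOrder in
/-- For posdef `A`, a symmetric invertible square root. -/
lemma posDef_sqrt_exists {A : Matrix (Fin n) (Fin n) ℝ} (hA : A.PosDef) :
    ∃ S : Matrix (Fin n) (Fin n) ℝ, S * S = A ∧ Sᵀ = S ∧ IsUnit S.det := by
  refine ⟨CFC.sqrt A, CFC.sqrt_mul_sqrt_self A hA.posSemidef.nonneg, ?_, ?_⟩
  · simpa [conjTranspose_eq_transpose_of_trivial] using (CFC.sqrt_nonneg A).posSemidef.1.eq
  · have h : (CFC.sqrt A).det * (CFC.sqrt A).det = A.det := by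
      rw [← det_mul, CFC.sqrt_mul_sqrt_self A hA.posSemidef.nonneg]
    have : A.det ≠ 0 := hA.det_pos.ne'
    refine isUnit_iff_ne_zero.2 fun h0 => this ?_
    rw [← h, h0, mul_zero]

/-- Loewner-order antitonicity of the inverse. -/
lemma posDef_inv_sub {A B : Matrix (Fin n) (Fin n) ℝ} (hA : A.PosDef) (hB : B.PosDef)
    (hAB : (A - B).PosDef) : (B⁻¹ - A⁻¹).PosDef := by
  -- first the special case A = 1 as an inner lemma
  have key : ∀ C : Matrix (Fin n) (Fin n) ℝ, C.PosDef → (1 - C).PosDef → (C⁻¹ - 1).PosDef := by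
    intro C hC h1C
    obtain ⟨S, hSS, hSt, hSd⟩ := posDef_sqrt_exists hC
    have hSid : IsUnit S⁻¹.det := isUnit_nonsing_inv_det S hSd
    have hSit : S⁻¹ᵀ = S⁻¹ := by rw [transpose_nonsing_inv, hSt]
    have hconj := posDef_conj h1C hSid
    rw [hSit] at hconj
    have : S⁻¹ * (1 - C) * S⁻¹ = C⁻¹ - 1 := by
      rw [Matrix.mul_sub, Matrix.sub_mul, Matrix.mul_one, ← hSS, Matrix.mul_inv_rev]
      congr 1
      rw [← Matrix.mul_assoc, nonsing_inv_mul _ hSd, Matrix.one_mul, mul_nonsing_inv _ hSd]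
    rwa [this] at hconj
  obtain ⟨S, hSS, hSt, hSd⟩ := posDef_sqrt_exists hA
  have hSid : IsUnit S⁻¹.det := isUnit_nonsing_inv_det S hSd
  have hSit : S⁻¹ᵀ = S⁻¹ := by rw [transpose_nonsing_inv, hSt]
  -- C = S⁻¹ B S⁻¹
  set C := S⁻¹ * B * S⁻¹ with hCdef
  have hC : C.PosDef := by
    have := posDef_conj hB hSid; rwa [hSit] at this
  have hSAS : S⁻¹ * A * S⁻¹ = 1 := by
    rw [← hSS, ← Matrix.mul_assoc, Matrix.mul_assoc (S⁻¹ * S), nonsing_inv_mul _ hSd,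
      Matrix.one_mul, mul_nonsing_inv _ hSd]
  have h1C : (1 - C).PosDef := by
    have := posDef_conj hAB hSid
    rw [hSit, Matrix.mul_sub, Matrix.sub_mul, hSAS] at this
    exact this
  have hfin := key C hC h1C
  have hconj := posDef_conj hfin hSid
  rw [hSit] at hconj
  have hCinv : C⁻¹ = S * B⁻¹ * S := by
    rw [hCdef, Matrix.mul_inv_rev, Matrix.mul_inv_rev, nonsing_inv_nonsing_inv _ hSd,
      Matrix.mul_assoc]
  have : S⁻¹ * (C⁻¹ - 1) * S⁻¹ = B⁻¹ - A⁻¹ := by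
    rw [Matrix.mul_sub, Matrix.sub_mul, Matrix.mul_one, hCinv]
    congr 1
    · rw [← Matrix.mul_assoc, ← Matrix.mul_assoc, nonsing_inv_mul _ hSd, Matrix.one_mul,
        Matrix.mul_assoc, mul_nonsing_inv _ hSd, Matrix.mul_one]
    · rw [← hSS, Matrix.mul_inv_rev]
  rwa [this] at hconj

/-- The sequence `w_k = (−1)^(k+1) (B 1 k − B 1 (k+1))` is decreasing in the
Loewner order: `w_k − w_{k+1}` is symmetric positive definite for every `k ≥ 1`. -/
theorem w_decreasing
    (n : ℕ) (hn : 1 ≤ n)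
    (t : ℕ → Matrix (Fin n) (Fin n) ℝ)
    (ht_lower : ∀ j, 1 ≤ j → ∀ i k : Fin n, i < k → t j i k = 0)
    (ht_diag : ∀ j, 1 ≤ j → ∀ i : Fin n, 0 < t j i i)
    (x : ℕ → Matrix (Fin n) (Fin n) ℝ)
    (hx : ∀ j, 1 ≤ j → x j = t j * (t j)ᵀ)
    (B : ℕ → ℕ → Matrix (Fin n) (Fin n) ℝ)
    (hB_diag : ∀ k, 1 ≤ k → B k k = x k)
    (hB_rec : ∀ j k, 1 ≤ j → j < k → B j k = t j * (1 + B (j+1) k)⁻¹ * (t j)ᵀ)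
    (w : ℕ → Matrix (Fin n) (Fin n) ℝ)
    (hw : ∀ k, 1 ≤ k → w k = (-1 : ℝ) ^ (k+1) • (B 1 k - B 1 (k+1))) :
    ∀ k, 1 ≤ k → (w k - w (k+1)).PosDef := by
  have ht_unit : ∀ j, 1 ≤ j → IsUnit (t j).det := by
    intro j hj
    have hdet : (t j).det = ∏ i, t j i i :=
      det_of_lowerTriangular (t j) (fun i k h => ht_lower j hj i k (by simpa using h))
    rw [hdet]
    exact isUnit_iff_ne_zero.2 (Finset.prod_pos (fun i _ => ht_diag j hj i)).ne'
  have hB_pd : ∀ d j, 1 ≤ j → (B j (j+d)).PosDef := by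
    intro d
    induction d with
    | zero =>
      intro j hj
      rw [Nat.add_zero, hB_diag j hj, hx j hj]
      simpa [Matrix.mul_one] using posDef_conj (Matrix.PosDef.one) (ht_unit j hj)
    | succ d ih =>
      intro j hj
      show (B j (j+d+1)).PosDef
      rw [hB_rec j (j+d+1) hj (by omega)]
      have hB' := ih (j+1) (by omega)
      rw [show j+1+d = j+d+1 by omega] at hB'
      exact posDef_conj (Matrix.PosDef.add Matrix.PosDef.one hB').inv (ht_unit j hj)
  have key : ∀ d j, 1 ≤ j →
      (Even d → (B j (j+d) - B j (j+d+2)).PosDef) ∧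
      (¬ Even d → (B j (j+d+2) - B j (j+d)).PosDef) := by
    intro d
    induction d with
    | zero =>
      intro j hj
      refine ⟨fun _ => ?_, fun h => absurd Even.zero h⟩
      rw [Nat.add_zero, hB_diag j hj, hx j hj, hB_rec j (j+2) hj (by omega)]
      have hBp : (B (j+1) (j+2)).PosDef := by
        have := hB_pd 1 (j+1) (by omega)
        rwa [show j+1+1 = j+2 by omega] at this
      have hD : (1 + B (j+1) (j+2)).PosDef := Matrix.PosDef.add Matrix.PosDef.one hBp
      have hsub : ((1:Matrix (Fin n) (Fin n) ℝ)⁻¹ - (1 + B (j+1) (j+2))⁻¹).PosDef :=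
        posDef_inv_sub hD Matrix.PosDef.one (by simpa using hBp)
      rw [inv_one] at hsub
      have hconj := posDef_conj hsub (ht_unit j hj)
      rw [Matrix.mul_sub, Matrix.sub_mul, Matrix.mul_one] at hconj
      exact hconj
    | succ d ih =>
      intro j hj
      have hr1 : B j (j+(d+1)) = t j * (1 + B (j+1) (j+d+1))⁻¹ * (t j)ᵀ :=
        hB_rec j (j+d+1) hj (by omega)
      have hr2 : B j (j+(d+1)+2) = t j * (1 + B (j+1) (j+d+3))⁻¹ * (t j)ᵀ := by
        have := hB_rec j (j+d+3) hj (by omega)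
        rwa [show j+(d+1)+2 = j+d+3 by omega]
      have ihj := ih (j+1) (by omega)
      rw [show j+1+d = j+d+1 by omega, show j+d+1+2 = j+d+3 by omega] at ihj
      have h1P : (1 + B (j+1) (j+d+1)).PosDef := by
        have := hB_pd d (j+1) (by omega)
        rw [show j+1+d = j+d+1 by omega] at this
        exact Matrix.PosDef.add Matrix.PosDef.one this
      have h1Q : (1 + B (j+1) (j+d+3)).PosDef := by
        have := hB_pd (d+2) (j+1) (by omega)
        rw [show j+1+(d+2) = j+d+3 by omega] at this
        exact Matrix.PosDef.add Matrix.PosDef.one this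
      constructor
      · intro hev
        have hodd : ¬ Even d := by
          rw [Nat.even_add_one] at hev; exact fun h => hev h
        have hPQ := ihj.2 hodd
        have hAB : ((1 + B (j+1) (j+d+3)) - (1 + B (j+1) (j+d+1))).PosDef := by
          simpa using hPQ
        have hinv := posDef_inv_sub h1Q h1P hAB
        have hconj := posDef_conj hinv (ht_unit j hj)
        rw [Matrix.mul_sub, Matrix.sub_mul] at hconj
        rw [hr1, hr2]
        exact hconj
      · intro hnev
        have hevd : Even d := by
          rw [Nat.even_add_one, not_not] at hnev; exact hnev
        have hPQ := ihj.1 hevd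
        have hAB : ((1 + B (j+1) (j+d+1)) - (1 + B (j+1) (j+d+3))).PosDef := by
          simpa using hPQ
        have hinv := posDef_inv_sub h1P h1Q hAB
        have hconj := posDef_conj hinv (ht_unit j hj)
        rw [Matrix.mul_sub, Matrix.sub_mul] at hconj
        rw [hr1, hr2]
        exact hconj
  intro k hk
  rw [hw k hk, hw (k+1) (by omega)]
  have hwk : (-1:ℝ)^(k+1) • (B 1 k - B 1 (k+1)) - (-1:ℝ)^(k+1+1) • (B 1 (k+1) - B 1 (k+2))
      = (-1:ℝ)^(k+1) • (B 1 k - B 1 (k+2)) := by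
    rw [pow_succ]
    module
  rw [hwk]
  rcases Nat.even_or_odd k with hek | hok
  · have hodd : ¬ Even (k-1) := by
      have h2 := Nat.even_iff.1 hek
      rw [Nat.even_iff]
      omega
    have hkey := (key (k-1) 1 le_rfl).2 hodd
    rw [show 1+(k-1) = k by omega] at hkey
    have hpow : (-1:ℝ)^(k+1) = -1 := Odd.neg_one_pow (Even.add_one hek)
    rw [hpow]
    simpa [neg_sub] using hkey
  · have hev : Even (k-1) := by
      have h2 := Nat.odd_iff.1 hok
      rw [Nat.even_iff]
      omega
    have hkey := (key (k-1) 1 le_rfl).1 hev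
    rw [show 1+(k-1) = k by omega] at hkey
    have hpow : (-1:ℝ)^(k+1) = 1 := Even.neg_one_pow (Odd.add_one hok)
    rw [hpow, one_smul]
    exact hkey
end
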